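/- Let n ≥ 1. For every g ∈ GL_n(ℂ) there exist a permutation matrix P, an upper unitriangular matrix u, a lower unitriangular matrix l, and an invertible diagonal matrix t, all n×n complex matrices, such that g = P·u·l·t. -/

import Mathlib

/-!
Gaussian elimination from the bottom-right corner. An invertible `M` has a nonzero entry in
its last column, and a row swap moves it to the corner `D`. Writing the result in blocks
`[[A, B], [C, D]]`, the Schur complement `S = A - B D⁻¹ C` is invertible, so by induction
`P' S = u' b'`, and then
`diag(P', 1) · [[A, B], [C, D]] = [[u', P' B D⁻¹], [0, 1]] · [[b', 0], [C, D]]`.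
The lower triangular factor finally splits off its (invertible) diagonal.
-/

open Matrix

/-- An upper unitriangular complex matrix: upper triangular with all diagonal
entries equal to `1`. -/
def IsUpperUnitriangular {n : ℕ} (u : Matrix (Fin n) (Fin n) ℂ) : Prop :=
  (∀ i, u i i = 1) ∧ ∀ i j : Fin n, j < i → u i j = 0

/-- A lower unitriangular complex matrix: lower triangular with all diagonal
entries equal to `1`. -/
def IsLowerUnitriangular {n : ℕ} (l : Matrix (Fin n) (Fin n) ℂ) : Prop :=
  (∀ i, l i i = 1) ∧ ∀ i j : Fin n, i < j → l i j = 0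

open Equiv

lemma finSumFinEquiv_inl_lt_inr {m k : ℕ} (i : Fin m) (j : Fin k) :
    finSumFinEquiv (Sum.inl i) < finSumFinEquiv (Sum.inr j) := by
  simpa [Fin.lt_def] using Nat.lt_add_right (j : ℕ) i.isLt

namespace Matrix

variable {R : Type*}

lemma permMatrix_sumCongr {m n : Type*} [DecidableEq m] [DecidableEq n] [Zero R] [One R]
    (σ : Perm m) (τ : Perm n) :
    (σ.sumCongr τ).permMatrix R = fromBlocks (σ.permMatrix R) 0 0 (τ.permMatrix R) := by
  ext (i | i) (j | j) <;> simp [PEquiv.toMatrix_apply]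

lemma reindex_permMatrix {m n : Type*} [DecidableEq m] [DecidableEq n] [Zero R] [One R]
    (e : m ≃ n) (σ : Perm m) :
    reindex e e (σ.permMatrix R) = (e.permCongr σ).permMatrix R := by
  ext i j
  simp [PEquiv.toMatrix_apply, eq_symm_apply]

lemma isUnit_det_permMatrix {ι : Type*} [Fintype ι] [DecidableEq ι] [CommRing R] (σ : Perm ι) :
    IsUnit (σ.permMatrix R).det := by
  rw [det_permutation]
  exact (Perm.sign σ).isUnit.map (Int.castRingHom R)

lemma exists_permMatrix_mul_apply_ne_zero {ι K : Type*} [Fintype ι] [DecidableEq ι] [Field K]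
    {M : Matrix ι ι K} (hM : M.det ≠ 0) (i j : ι) :
    ∃ τ : Perm ι, (τ.permMatrix K * M) i j ≠ 0 := by
  obtain ⟨k, hk⟩ : ∃ k, M k j ≠ 0 := by
    by_contra! h
    exact hM (det_eq_zero_of_column_eq_zero j h)
  exact ⟨Equiv.swap i k, by simpa [PEquiv.toMatrix_toPEquiv_mul] using hk⟩

lemma isUpperTriangular_reindex_fromBlocks [Zero R] {m k : ℕ} {A : Matrix (Fin m) (Fin m) R}
    {D : Matrix (Fin k) (Fin k) R} (hA : A.IsUpperTriangular) (hD : D.IsUpperTriangular)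
    (B : Matrix (Fin m) (Fin k) R) :
    (reindex finSumFinEquiv finSumFinEquiv (fromBlocks A B 0 D)).IsUpperTriangular := by
  rw [IsUpperTriangular, blockTriangular_reindex_iff]
  rintro (i | i) (j | j) h
  · exact hA h
  · exact absurd h (finSumFinEquiv_inl_lt_inr i j).asymm
  · rfl
  · exact hD ((Fin.natAdd_lt_natAdd_iff m).mp h)

lemma isLowerTriangular_reindex_fromBlocks [Zero R] {m k : ℕ} {A : Matrix (Fin m) (Fin m) R}
    {D : Matrix (Fin k) (Fin k) R} (hA : A.IsLowerTriangular) (hD : D.IsLowerTriangular)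
    (C : Matrix (Fin k) (Fin m) R) :
    (reindex finSumFinEquiv finSumFinEquiv (fromBlocks A 0 C D)).IsLowerTriangular := by
  rw [IsLowerTriangular, blockTriangular_reindex_iff]
  rintro (i | i) (j | j) h
  · exact hA h
  · rfl
  · exact absurd h (finSumFinEquiv_inl_lt_inr j i).asymm
  · exact hD ((Fin.natAdd_lt_natAdd_iff m).mp h)

lemma reindex_fromBlocks_apply_self_eq_one [Zero R] [One R] {l m n : Type*} {A : Matrix m m R}
    {D : Matrix n n R} (hA : ∀ i, A i i = 1) (hD : ∀ i, D i i = 1) (B : Matrix m n R)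
    (C : Matrix n m R) (e : m ⊕ n ≃ l) (i : l) :
    reindex e e (fromBlocks A B C D) i i = 1 := by
  obtain ⟨j | j, rfl⟩ := e.surjective i <;> simp [hA, hD]

section Schur

variable {m n : Type*} [Fintype m] [Fintype n] [DecidableEq n] [CommRing R]
  {A : Matrix m m R} {B : Matrix m n R} {C : Matrix n m R} {D : Matrix n n R} [Invertible D]

lemma det_schur_ne_zero_of_det_fromBlocks_ne_zero [DecidableEq m] [IsDomain R]
    (h : (fromBlocks A B C D).det ≠ 0) :
    (A - B * ⅟D * C).det ≠ 0 :=
  right_ne_zero_of_mul (det_fromBlocks₂₂ A B C D ▸ h)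

lemma fromBlocks_mul_fromBlocks_eq_of_mul_schur {P u b : Matrix m m R}
    (h : P * (A - B * ⅟D * C) = u * b) :
    fromBlocks P 0 0 1 * fromBlocks A B C D =
      fromBlocks u (P * B * ⅟D) 0 1 * fromBlocks b 0 C D := by
  simp [fromBlocks_multiply, ← h, Matrix.mul_sub, Matrix.mul_assoc]

end Schur

theorem exists_permMatrix_mul_eq_unitriangular_mul_lowerTriangular {K : Type*} [Field K] :
    ∀ {n : ℕ} (M : Matrix (Fin n) (Fin n) K), M.det ≠ 0 →
      ∃ (σ : Perm (Fin n)) (u b : Matrix (Fin n) (Fin n) K),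
        u.IsUpperTriangular ∧ (∀ i, u i i = 1) ∧ b.IsLowerTriangular ∧
        σ.permMatrix K * M = u * b
  | 0, M, _ => ⟨1, 1, M, finZeroElim, finZeroElim, finZeroElim, by simp⟩
  | n + 1, M, hM => by
    let e : Fin n ⊕ Fin 1 ≃ Fin (n + 1) := finSumFinEquiv
    obtain ⟨τ, hτ⟩ := exists_permMatrix_mul_apply_ne_zero hM (e (.inr 0)) (e (.inr 0))
    set N := reindex e.symm e.symm (τ.permMatrix K * M)
    set A := N.toBlocks₁₁
    set B := N.toBlocks₁₂
    set C := N.toBlocks₂₁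
    set D := N.toBlocks₂₂
    have hD : D.det ≠ 0 := by simpa [D, N, det_fin_one, toBlocks₂₂] using hτ
    let := D.invertibleOfIsUnitDet hD.isUnit
    have hS : (A - B * ⅟D * C).det ≠ 0 := by
      refine det_schur_ne_zero_of_det_fromBlocks_ne_zero ?_
      rw [fromBlocks_toBlocks, det_reindex_self, det_mul]
      exact mul_ne_zero (isUnit_det_permMatrix τ).ne_zero hM
    obtain ⟨σ, u, b, hu, hu_one, hb, hσ⟩ :=
      exists_permMatrix_mul_eq_unitriangular_mul_lowerTriangular _ hS
    refine ⟨τ * e.permCongr (σ.sumCongr 1),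
      reindex e e (fromBlocks u (σ.permMatrix K * B * ⅟D) 0 1), reindex e e (fromBlocks b 0 C D),
      isUpperTriangular_reindex_fromBlocks hu blockTriangular_one _,
      reindex_fromBlocks_apply_self_eq_one hu_one (by simp) _ _ e,
      isLowerTriangular_reindex_fromBlocks hb
        (fun _ _ h => (h.ne (Subsingleton.elim _ _)).elim) _, ?_⟩
    have hblocks := congrArg (reindex e e) (fromBlocks_mul_fromBlocks_eq_of_mul_schur hσ)
    rw [fromBlocks_toBlocks] at hblocks
    rw [permMatrix_mul, Matrix.mul_assoc, ← reindex_permMatrix, permMatrix_sumCongr,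
      permMatrix_one, show τ.permMatrix K * M = reindex e e N by simp [N]]
    simpa only [reindex_apply, submatrix_mul_equiv] using hblocks

lemma IsLowerTriangular.exists_unitriangular_mul_diagonal {ι K : Type*} [Fintype ι]
    [LinearOrder ι] [Field K] {b : Matrix ι ι K} (hb : b.IsLowerTriangular)
    (hdet : b.det ≠ 0) :
    ∃ (l : Matrix ι ι K) (d : ι → K), l.IsLowerTriangular ∧ (∀ i, l i i = 1) ∧
      IsUnit (diagonal d) ∧ b = l * diagonal d := by
  have hdiag : ∀ i, b i i ≠ 0 := by
    simpa [det_of_isLowerTriangular b hb, Finset.prod_ne_zero_iff] using hdet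
  refine ⟨b * diagonal b.diag⁻¹, b.diag, hb.mul (blockTriangular_diagonal _),
    fun i => by simp [hdiag i],
    isUnit_diagonal.mpr (Pi.isUnit_iff.mpr fun i => (hdiag i).isUnit), ?_⟩
  rw [Matrix.mul_assoc, diagonal_mul_diagonal]
  simp [hdiag]

end Matrix

theorem gl_n_bruhat_covering_general (n : ℕ)
    (g : Matrix (Fin n) (Fin n) ℂ) (hg : IsUnit g) :
    ∃ (σ : Equiv.Perm (Fin n)) (u l t : Matrix (Fin n) (Fin n) ℂ),
      IsUpperUnitriangular u ∧ IsLowerUnitriangular l ∧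
      t.IsDiag ∧ IsUnit t ∧
      g = (σ.permMatrix ℂ) * u * l * t := by
  have hg_det : g.det ≠ 0 := ((isUnit_iff_isUnit_det g).mp hg).ne_zero
  obtain ⟨σ, u, b, hu, hu_one, hb, hσ⟩ :=
    exists_permMatrix_mul_eq_unitriangular_mul_lowerTriangular g hg_det
  have hb_det : b.det ≠ 0 := by
    have h := congrArg det hσ
    rw [det_mul, det_mul, det_of_isUpperTriangular hu, Finset.prod_eq_one fun i _ => hu_one i,
      one_mul] at h
    exact h ▸ mul_ne_zero (isUnit_det_permMatrix σ).ne_zero hg_det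
  obtain ⟨l, d, hl, hl_one, hd, rfl⟩ := hb.exists_unitriangular_mul_diagonal hb_det
  refine ⟨σ⁻¹, u, l, diagonal d, ⟨hu_one, fun _ _ h => hu h⟩,
    ⟨hl_one, fun _ _ h => hl h⟩, isDiag_diagonal d, hd, ?_⟩
  simp only [Matrix.mul_assoc]
  rw [← hσ, ← Matrix.mul_assoc, ← permMatrix_mul, mul_inv_cancel, permMatrix_one,
    Matrix.one_mul]

/-- Bruhat-type covering of `GL_n(ℂ)`: every invertible matrix factors as
(permutation matrix)·(upper unitriangular)·(lower unitriangular)·(invertible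
diagonal), i.e. `G = ⋃_{σ ∈ W} σ·U·Q` for the Borel subgroup `Q` of lower
triangular matrices. -/
theorem gl_n_bruhat_covering (n : ℕ) (hn : 1 ≤ n)
    (g : Matrix (Fin n) (Fin n) ℂ) (hg : IsUnit g) :
    ∃ (σ : Equiv.Perm (Fin n)) (u l t : Matrix (Fin n) (Fin n) ℂ),
      IsUpperUnitriangular u ∧ IsLowerUnitriangular l ∧
      t.IsDiag ∧ IsUnit t ∧
      g = (σ.permMatrix ℂ) * u * l * t :=
  gl_n_bruhat_covering_general n g hg
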